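/- arXiv:math/9902116 — 5 statements merged into one kernel-verified Lean document; each statement's English description precedes it below -/
import Mathlib

section
/- For every r ∈ [1/2, 1], x, y ∈ [0, 1], and ρ ∈ [-(1-r)/r, (1-r)/r], one has (1+ρ)(1-x)^r (1-y)^r + (1-ρ)(1-x)^r (1+y)^r + (1-ρ)(1+x)^r (1-y)^r + (1+ρ)(1+x)^r (1+y)^r ≤ 4. -/
set_option maxHeartbeats 1000000

lemma sinh_smul_le (σ L : ℝ) (hσ0 : 0 ≤ σ) (hσ1 : σ ≤ 1) (hL : 0 ≤ L) :
    Real.sinh (σ * L) ≤ σ * Real.sinh L := by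
  have key : MonotoneOn (fun L => σ * Real.sinh L - Real.sinh (σ * L)) (Set.Ici 0) := by
    apply monotoneOn_of_deriv_nonneg (convex_Ici 0)
    · fun_prop
    · apply DifferentiableOn.sub <;> fun_prop
    · intro t ht
      have h1 : HasDerivAt (fun L => σ * Real.sinh L - Real.sinh (σ * L))
          (σ * Real.cosh t - Real.cosh (σ * t) * σ) t := by
        have := ((Real.hasDerivAt_sinh t).const_mul σ).sub
          ((Real.hasDerivAt_sinh (σ*t)).comp t ((hasDerivAt_id t).const_mul σ))
        exact this.congr_deriv (by ring)
      rw [h1.deriv]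
      have ht0 : (0:ℝ) ≤ t := le_of_lt (by simpa using ht)
      have : Real.cosh (σ * t) ≤ Real.cosh t := by
        rw [Real.cosh_le_cosh]
        rw [abs_of_nonneg (by positivity), abs_of_nonneg ht0]
        nlinarith
      nlinarith
  have h := key (Set.self_mem_Ici) (by exact hL) hL
  simp at h
  linarith

lemma rpow_diff_le (A B σ : ℝ) (hA : 0 < A) (hB : 0 < B) (hAB : A ≤ B)
    (hσ0 : 0 ≤ σ) (hσ1 : σ ≤ 1) :
    B ^ σ - A ^ σ ≤ σ * (B - A) * (A * B) ^ ((σ - 1) / 2) := by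
  obtain ⟨α, rfl⟩ : ∃ α, A = Real.exp α := ⟨Real.log A, (Real.exp_log hA).symm⟩
  obtain ⟨β, rfl⟩ : ∃ β, B = Real.exp β := ⟨Real.log B, (Real.exp_log hB).symm⟩
  have hαβ : α ≤ β := Real.exp_le_exp.mp hAB
  have hS := sinh_smul_le σ ((β - α) / 2) hσ0 hσ1 (by linarith)
  rw [Real.sinh_eq, Real.sinh_eq] at hS
  have key := mul_le_mul_of_nonneg_left hS (le_of_lt (Real.exp_pos (σ * (α + β) / 2)))
  rw [← Real.exp_mul, ← Real.exp_mul, ← Real.exp_add, ← Real.exp_mul]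
  have h1 : Real.exp (β * σ) = Real.exp (σ * (α + β) / 2) * Real.exp (σ * ((β - α) / 2)) := by
    rw [← Real.exp_add]; congr 1; ring
  have h2 : Real.exp (α * σ) = Real.exp (σ * (α + β) / 2) * Real.exp (-(σ * ((β - α) / 2))) := by
    rw [← Real.exp_add]; congr 1; ring
  have h3 : Real.exp β * Real.exp ((α + β) * ((σ - 1) / 2))
      = Real.exp (σ * (α + β) / 2) * Real.exp ((β - α) / 2) := by
    rw [← Real.exp_add, ← Real.exp_add]; congr 1; ring
  have h4 : Real.exp α * Real.exp ((α + β) * ((σ - 1) / 2))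
      = Real.exp (σ * (α + β) / 2) * Real.exp (-((β - α) / 2)) := by
    rw [← Real.exp_add, ← Real.exp_add]; congr 1; ring
  have expand : σ * (Real.exp β - Real.exp α) * Real.exp ((α + β) * ((σ - 1) / 2))
      = σ * (Real.exp β * Real.exp ((α + β) * ((σ - 1) / 2))
          - Real.exp α * Real.exp ((α + β) * ((σ - 1) / 2))) := by ring
  rw [expand, h1, h2, h3, h4]
  nlinarith [key]

lemma one_var (s t : ℝ) (hs1 : 1 ≤ s) (hs2 : s ≤ 2) (ht0 : 0 ≤ t) (ht1 : t ≤ 1) :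
    (1 - t) ^ s + (1 + t) ^ s + (2 * s - 2) * (1 - t ^ 2) ^ (s / 2) ≤ 2 * s := by
  set F : ℝ → ℝ := fun u => (1 - u) ^ s + (1 + u) ^ s + (2 * s - 2) * (1 - u ^ 2) ^ (s / 2)
    with hF
  have hderiv : ∀ u ∈ Set.Ioo (0:ℝ) 1, HasDerivAt F
      ((-1) * s * (1 - u) ^ (s - 1) + 1 * s * (1 + u) ^ (s - 1)
        + (2 * s - 2) * ((0 - 2 * u ^ 1) * (s / 2) * (1 - u ^ 2) ^ (s / 2 - 1))) u := by
    intro u hu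
    obtain ⟨hu0, hu1⟩ := hu
    have d1 : HasDerivAt (fun v : ℝ => (1 - v) ^ s) ((-1) * s * (1 - u) ^ (s - 1)) u := by
      have : HasDerivAt (fun v : ℝ => 1 - v) (-1) u := by
        simpa using (hasDerivAt_id u).const_sub 1
      exact this.rpow_const (Or.inl (by norm_num; linarith))
    have d2 : HasDerivAt (fun v : ℝ => (1 + v) ^ s) (1 * s * (1 + u) ^ (s - 1)) u := by
      have : HasDerivAt (fun v : ℝ => 1 + v) 1 u := by
        simpa using (hasDerivAt_id u).const_add 1
      exact this.rpow_const (Or.inl (by positivity))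
    have d3 : HasDerivAt (fun v : ℝ => (2 * s - 2) * (1 - v ^ 2) ^ (s / 2))
        ((2 * s - 2) * ((0 - 2 * u ^ 1) * (s / 2) * (1 - u ^ 2) ^ (s / 2 - 1))) u := by
      have hb : HasDerivAt (fun v : ℝ => 1 - v ^ 2) (0 - 2 * u ^ 1) u := by
        exact ((hasDerivAt_const u (1:ℝ)).sub (hasDerivAt_pow 2 u)).congr_deriv (by norm_num)
      have hne : 1 - u ^ 2 ≠ 0 := by nlinarith
      exact (hb.rpow_const (Or.inl hne)).const_mul _
    exact (d1.add d2).add d3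
  have hanti : AntitoneOn F (Set.Icc 0 1) := by
    apply antitoneOn_of_deriv_nonpos (convex_Icc 0 1)
    · apply ContinuousOn.add
      apply ContinuousOn.add
      · apply ContinuousOn.rpow_const (by fun_prop)
        intro x hx; right; linarith
      · apply ContinuousOn.rpow_const (by fun_prop)
        intro x hx; right; linarith
      · apply ContinuousOn.mul continuousOn_const
        apply ContinuousOn.rpow_const (by fun_prop)
        intro x hx; right; positivity
    · rw [interior_Icc]
      intro u hu
      exact ((hderiv u hu).differentiableAt).differentiableWithinAt
    · rw [interior_Icc]
      intro u hu
      rw [(hderiv u hu).deriv]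
      obtain ⟨hu0, hu1⟩ := hu
      have key := rpow_diff_le (1 - u) (1 + u) (s - 1) (by linarith) (by linarith)
        (by linarith) (by linarith) (by linarith)
      rw [show (1 - u) * (1 + u) = 1 - u ^ 2 by ring,
        show (s - 1 - 1) / 2 = s / 2 - 1 by ring,
        show (1 + u) - (1 - u) = 2 * u by ring] at key
      have hb2 : (0:ℝ) < 1 - u ^ 2 := by nlinarith
      have hpos : (0:ℝ) ≤ (1 - u ^ 2) ^ (s / 2 - 1) := by positivity
      nlinarith [key, hs1, hu0]
  have h0 : F 0 = 2 * s := by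
    simp [hF]; ring
  have := hanti (Set.mem_Icc.mpr ⟨le_refl 0, zero_le_one⟩) (Set.mem_Icc.mpr ⟨ht0, ht1⟩) ht0
  rw [h0] at this
  exact this

lemma quad_bound (r x : ℝ) (hr1 : 1/2 ≤ r) (hr2 : r ≤ 1) (hx0 : 0 ≤ x) (hx1 : x ≤ 1) :
    ((1 - x) ^ r) ^ 2 + ((1 + x) ^ r) ^ 2 + (4 * r - 2) * ((1 - x) ^ r * (1 + x) ^ r)
      ≤ 4 * r := by
  have h1 : (0:ℝ) ≤ 1 - x := by linarith
  have h2 : (0:ℝ) ≤ 1 + x := by linarith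
  have e1 : ((1 - x) ^ r) ^ 2 = (1 - x) ^ (2 * r) := by
    rw [show (2:ℝ) * r = r * 2 by ring, Real.rpow_mul h1, Real.rpow_two]
  have e2 : ((1 + x) ^ r) ^ 2 = (1 + x) ^ (2 * r) := by
    rw [show (2:ℝ) * r = r * 2 by ring, Real.rpow_mul h2, Real.rpow_two]
  have e3 : (1 - x) ^ r * (1 + x) ^ r = (1 - x ^ 2) ^ r := by
    rw [← Real.mul_rpow h1 h2]; congr 1; ring
  have key := one_var (2 * r) x (by linarith) (by linarith) hx0 hx1
  rw [show (2 * r) / 2 = r by ring] at key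
  rw [e1, e2, e3]
  linarith

theorem four_point_inequality (r x y ρ : ℝ)
    (hr : r ∈ Set.Icc (1/2 : ℝ) 1)
    (hx : x ∈ Set.Icc (0 : ℝ) 1) (hy : y ∈ Set.Icc (0 : ℝ) 1)
    (hρ : ρ ∈ Set.Icc (-((1 - r) / r)) ((1 - r) / r)) :
    (1 + ρ) * (1 - x) ^ r * (1 - y) ^ r + (1 - ρ) * (1 - x) ^ r * (1 + y) ^ r
      + (1 - ρ) * (1 + x) ^ r * (1 - y) ^ r + (1 + ρ) * (1 + x) ^ r * (1 + y) ^ r ≤ 4 := by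
  obtain ⟨hr1, hr2⟩ := hr
  obtain ⟨hx0, hx1⟩ := hx
  obtain ⟨hy0, hy1⟩ := hy
  obtain ⟨hρ1, hρ2⟩ := hρ
  have hrpos : (0:ℝ) < r := by linarith
  set a := (1 - x) ^ r with ha
  set b := (1 + x) ^ r with hb
  set c := (1 - y) ^ r with hc
  set d := (1 + y) ^ r with hd
  have ha0 : 0 ≤ a := Real.rpow_nonneg (by linarith) r
  have hc0 : 0 ≤ c := Real.rpow_nonneg (by linarith) r
  have hab : a ≤ b := Real.rpow_le_rpow (by linarith) (by linarith) (le_of_lt hrpos)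
  have hcd : c ≤ d := Real.rpow_le_rpow (by linarith) (by linarith) (le_of_lt hrpos)
  have hρr1 : ρ * r ≤ 1 - r := (le_div_iff₀ hrpos).mp hρ2
  have hρr2 : -(1 - r) ≤ ρ * r := by
    have h' : (-(1 - r)) / r ≤ ρ := by rw [neg_div]; exact hρ1
    exact (div_le_iff₀ hrpos).mp h'
  have keyx := quad_bound r x hr1 hr2 hx0 hx1
  have keyy := quad_bound r y hr1 hr2 hy0 hy1
  rw [← ha, ← hb] at keyx
  rw [← hc, ← hd] at keyy
  -- weighted quantities
  have X1 : r * (a + b) ^ 2 + (1 - r) * (b - a) ^ 2 ≤ 4 * r := by nlinarith [keyx]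
  have X2 : r * (c + d) ^ 2 + (1 - r) * (d - c) ^ 2 ≤ 4 * r := by nlinarith [keyy]
  have X1n : 0 ≤ r * (a + b) ^ 2 + (1 - r) * (b - a) ^ 2 := by
    nlinarith [sq_nonneg (a + b), sq_nonneg (b - a)]
  have X2n : 0 ≤ r * (c + d) ^ 2 + (1 - r) * (d - c) ^ 2 := by
    nlinarith [sq_nonneg (c + d), sq_nonneg (d - c)]
  have hTn : 0 ≤ r * ((a + b) * (c + d)) + (1 - r) * ((b - a) * (d - c)) := by
    have := mul_nonneg (by linarith : (0:ℝ) ≤ a + b) (by linarith : (0:ℝ) ≤ c + d)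
    have := mul_nonneg (by linarith : (0:ℝ) ≤ b - a) (by linarith : (0:ℝ) ≤ d - c)
    nlinarith
  have hCS : (r * ((a + b) * (c + d)) + (1 - r) * ((b - a) * (d - c))) ^ 2
      ≤ (r * (a + b) ^ 2 + (1 - r) * (b - a) ^ 2) * (r * (c + d) ^ 2 + (1 - r) * (d - c) ^ 2) := by
    nlinarith [mul_nonneg (mul_nonneg (le_of_lt hrpos) (by linarith : (0:ℝ) ≤ 1 - r))
      (sq_nonneg ((a + b) * (d - c) - (c + d) * (b - a)))]
  have hT : r * ((a + b) * (c + d)) + (1 - r) * ((b - a) * (d - c)) ≤ 4 * r := by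
    nlinarith [hCS, X1, X2, X1n, X2n, hTn, hrpos]
  have hm := mul_le_mul_of_nonneg_right hρr1
    (mul_nonneg (by linarith : (0:ℝ) ≤ b - a) (by linarith : (0:ℝ) ≤ d - c))
  have hfinal : r * ((1 + ρ) * a * c + (1 - ρ) * a * d + (1 - ρ) * b * c + (1 + ρ) * b * d)
      ≤ r * 4 := by
    have expand : r * ((1 + ρ) * a * c + (1 - ρ) * a * d + (1 - ρ) * b * c + (1 + ρ) * b * d)
        = r * ((a + b) * (c + d)) + (ρ * r) * ((b - a) * (d - c)) := by ring
    rw [expand]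
    have hm' : (ρ * r) * ((b - a) * (d - c)) ≤ (1 - r) * ((b - a) * (d - c)) := hm
    linarith [hT, hm']
  exact (mul_le_mul_iff_right₀ hrpos).mp hfinal
end

section
/- For every r ∈ (1/2, 1), the function φ(u) = u^(2r-1) - 1 - (2r-1)(u^r - u^(r-1)) on [1, ∞) is strictly decreasing on (1, ∞); in particular u = 1 is its only zero in [1, ∞). -/
lemma phi_aux_g_neg (r : ℝ) (hr : r ∈ Set.Ioo (1/2 : ℝ) 1) :
    ∀ u : ℝ, 1 < u → u ^ r - r * u + (r - 1) < 0 := by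
  obtain ⟨hr1, hr2⟩ := hr
  have hanti : StrictAntiOn (fun u : ℝ => u ^ r - r * u + (r - 1)) (Set.Ici 1) := by
    apply strictAntiOn_of_deriv_neg (convex_Ici 1)
    · apply ContinuousOn.add
      · apply ContinuousOn.sub
        · intro x hx
          exact (Real.continuousAt_rpow_const x r (Or.inl (by simp at hx; positivity))).continuousWithinAt
        · exact (continuous_const.mul continuous_id).continuousOn
      · exact continuousOn_const
    · intro x hx
      rw [interior_Ici] at hx
      have hx0 : (0:ℝ) < x := lt_trans one_pos hx
      have hd : HasDerivAt (fun u : ℝ => u ^ r - r * u + (r - 1))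
          (r * x ^ (r - 1) - r * 1) x := by
        have h1 := Real.hasDerivAt_rpow_const (p := r) (Or.inl hx0.ne')
        have h2 := (hasDerivAt_id x).const_mul r
        exact (h1.sub h2).add_const (r - 1)
      rw [hd.deriv]
      have : x ^ (r - 1) < 1 :=
        Real.rpow_lt_one_of_one_lt_of_neg hx (by linarith)
      nlinarith
  intro u hu
  have := hanti (Set.self_mem_Ici) (Set.mem_Ici.mpr hu.le) hu
  simpa [Real.one_rpow] using this

lemma phi_strictAntiOn_Ici (r : ℝ) (hr : r ∈ Set.Ioo (1/2 : ℝ) 1) :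
    StrictAntiOn (fun u : ℝ => u ^ (2 * r - 1) - 1 - (2 * r - 1) * (u ^ r - u ^ (r - 1)))
      (Set.Ici 1) := by
  obtain ⟨hr1, hr2⟩ := hr
  apply strictAntiOn_of_deriv_neg (convex_Ici 1)
  · have hcont : ∀ p : ℝ, ContinuousOn (fun u : ℝ => u ^ p) (Set.Ici 1) := by
      intro p x hx
      exact (Real.continuousAt_rpow_const x p (Or.inl (by simp at hx; positivity))).continuousWithinAt
    exact (((hcont _).sub continuousOn_const).sub
      (continuousOn_const.mul ((hcont _).sub (hcont _))))
  · intro x hx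
    rw [interior_Ici] at hx
    have hx0 : (0:ℝ) < x := lt_trans one_pos hx
    have hd : HasDerivAt (fun u : ℝ => u ^ (2 * r - 1) - 1 - (2 * r - 1) * (u ^ r - u ^ (r - 1)))
        ((2 * r - 1) * x ^ (2 * r - 1 - 1) -
          (2 * r - 1) * (r * x ^ (r - 1) - (r - 1) * x ^ (r - 1 - 1))) x := by
      have h1 := Real.hasDerivAt_rpow_const (p := 2 * r - 1) (Or.inl hx0.ne')
      have h2 := Real.hasDerivAt_rpow_const (p := r) (Or.inl hx0.ne')
      have h3 := Real.hasDerivAt_rpow_const (p := r - 1) (Or.inl hx0.ne')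
      exact ((h1.sub_const 1).sub ((h2.sub h3).const_mul (2 * r - 1)))
    rw [hd.deriv]
    have hfac : (2 * r - 1) * x ^ (2 * r - 1 - 1) -
          (2 * r - 1) * (r * x ^ (r - 1) - (r - 1) * x ^ (r - 1 - 1)) =
        (2 * r - 1) * x ^ (r - 2) * (x ^ r - r * x + (r - 1)) := by
      rw [show (2 * r - 1 - 1 : ℝ) = (r - 2) + r by ring, Real.rpow_add hx0,
        show (r - 1 : ℝ) = (r - 2) + 1 by ring, Real.rpow_add hx0, Real.rpow_one]
      ring_nf
    rw [hfac]
    exact mul_neg_of_pos_of_neg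
      (mul_pos (by linarith) (Real.rpow_pos_of_pos hx0 _))
      (phi_aux_g_neg r ⟨hr1, hr2⟩ x hx)

theorem phi_strictAnti_and_unique_zero (r : ℝ) (hr : r ∈ Set.Ioo (1/2 : ℝ) 1) :
    StrictAntiOn (fun u : ℝ => u ^ (2 * r - 1) - 1 - (2 * r - 1) * (u ^ r - u ^ (r - 1)))
      (Set.Ioi 1) ∧
    ∀ u : ℝ, 1 ≤ u →
      (u ^ (2 * r - 1) - 1 - (2 * r - 1) * (u ^ r - u ^ (r - 1)) = 0 ↔ u = 1) := by
  have hA := phi_strictAntiOn_Ici r hr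
  constructor
  · exact hA.mono Set.Ioi_subset_Ici_self
  · intro u hu
    constructor
    · intro h0
      by_contra hne
      have hu1 : 1 < u := lt_of_le_of_ne hu (Ne.symm hne)
      have := hA Set.self_mem_Ici (Set.mem_Ici.mpr hu) hu1
      simp only [Real.one_rpow] at this
      rw [h0] at this
      linarith
    · intro h
      subst h
      simp [Real.one_rpow]
end

section
/- For every r ∈ (1/2, 1) and fixed v₀ > 1, the function ψ(u) = v₀ - u + (2r-1)(u^r v₀ - u v₀^r + u^r - v₀^r) on [1, ∞) is concave and satisfies ψ(1) ≥ (v₀ - 1)(2 - 2r) > 0. -/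
theorem psi_concave_and_positive_at_one (r v₀ : ℝ)
    (hr : r ∈ Set.Ioo (1/2 : ℝ) 1) (hv : 1 < v₀) :
    ConcaveOn ℝ (Set.Ici 1)
      (fun u : ℝ => v₀ - u + (2 * r - 1) * (u ^ r * v₀ - u * v₀ ^ r + u ^ r - v₀ ^ r)) ∧
    v₀ - 1 + (2 * r - 1) * ((1 : ℝ) ^ r * v₀ - 1 * v₀ ^ r + (1 : ℝ) ^ r - v₀ ^ r)
      ≥ (v₀ - 1) * (2 - 2 * r) ∧
    0 < (v₀ - 1) * (2 - 2 * r) := by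
  obtain ⟨hr1, hr2⟩ := hr
  refine ⟨?_, ?_, ?_⟩
  · have hpow : ConcaveOn ℝ (Set.Ici 1) (fun x : ℝ => x ^ r) :=
      (Real.concaveOn_rpow (by linarith) hr2.le).subset
        (Set.Ici_subset_Ici.2 zero_le_one) (convex_Ici 1)
    have hc : (0 : ℝ) ≤ (2 * r - 1) * (v₀ + 1) := by nlinarith
    have hsmul := hpow.smul hc
    have haff := (((LinearMap.id (R := ℝ) (M := ℝ)).smulRight
        (-(1 + (2 * r - 1) * v₀ ^ r))).concaveOn
        (convex_Ici (1 : ℝ))).add_const (v₀ - (2 * r - 1) * v₀ ^ r)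
    have key := hsmul.add haff
    convert key using 1
    case e'_4 => rfl
    case e'_10 => rfl
    funext u
    simp only [Pi.add_apply, LinearMap.smulRight_apply, LinearMap.id_apply, smul_eq_mul]
    ring
  · have h1 : (1 : ℝ) ^ r = 1 := Real.one_rpow r
    have hvr : v₀ ^ r ≤ v₀ := by
      calc v₀ ^ r ≤ v₀ ^ (1 : ℝ) := Real.rpow_le_rpow_of_exponent_le hv.le hr2.le
        _ = v₀ := Real.rpow_one v₀
    rw [h1]
    nlinarith [mul_nonneg (by linarith : (0:ℝ) ≤ 2*r-1) (by linarith : (0:ℝ) ≤ v₀ - v₀^r)]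
  · nlinarith
end

section
/- Let τ', τ'' be {-1,+1}-valued random variables on a probability space, each uniform (P(τ'=1)=P(τ'=-1)=1/2 and likewise for τ''), and let ρ = E[τ'τ'']. Then for all functions f, g : {-1,+1} → ℝ with ρ ∈ [0,1], |E[f(τ') g(τ'')]|^(1+ρ) ≤ E[|f(τ')|^(1+ρ)] · E[|g(τ'')|^(1+ρ)]. -/
open MeasureTheory

section AuxHyper
open Real



lemma aux_amgm {u v : ℝ} (hu : 0 < u) (hv : 0 < v) (huv : 1 ≤ u * v) : 2 ≤ u + v := by
  have h1 : 1 ≤ Real.sqrt (u * v) := by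
    rw [show (1:ℝ) = Real.sqrt 1 by simp]
    exact Real.sqrt_le_sqrt huv
  have h2 : Real.sqrt (u * v) = Real.sqrt u * Real.sqrt v := Real.sqrt_mul hu.le v
  nlinarith [sq_nonneg (Real.sqrt u - Real.sqrt v), Real.sq_sqrt hu.le, Real.sq_sqrt hv.le]

lemma bonami_main {ρ : ℝ} (hρpos : 0 < ρ) (hρ1 : ρ ≤ 1) :
    ∀ e ∈ Set.Icc (0:ℝ) 1,
      (1 + ρ * e ^ 2) ^ ((1 + ρ)/2) ≤ ((1 + e) ^ (1 + ρ) + (1 - e) ^ (1 + ρ)) / 2 := by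
  set p := 1 + ρ with hp
  clear_value p
  have hρ0 : (0:ℝ) ≤ ρ := hρpos.le
  have hp1 : 1 ≤ p := by rw [hp]; linarith
  have hp2 : p ≤ 2 := by rw [hp]; linarith
  set φ : ℝ → ℝ := fun e => p * (1+e) ^ ρ - p * (1-e) ^ ρ - 2*p*ρ*e with hφ
  set g : ℝ → ℝ := fun e => (1+e) ^ p + (1-e) ^ p - 2 - p*ρ*e^2 with hg
  have hφd : ∀ e ∈ Set.Ioo (0:ℝ) 1,
      HasDerivAt φ (p*ρ*(1+e)^(ρ-1) + p*ρ*(1-e)^(ρ-1) - 2*p*ρ) e := by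
    intro e he
    have h1 : HasDerivAt (fun x : ℝ => 1 + x) 1 e := by
      simpa using (hasDerivAt_id e).const_add 1
    have h2 : HasDerivAt (fun x : ℝ => 1 - x) (-1) e := by
      simpa using (hasDerivAt_id e).const_sub 1
    have h1' := h1.rpow_const (p := ρ) (Or.inl (by nlinarith [he.1] : (1:ℝ) + e ≠ 0))
    have h2' := h2.rpow_const (p := ρ) (Or.inl (by nlinarith [he.2] : (1:ℝ) - e ≠ 0))
    have h3 : HasDerivAt (fun x : ℝ => 2*p*ρ*x) (2*p*ρ) e := by
      simpa using (hasDerivAt_id e).const_mul (2*p*ρ)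
    have := ((h1'.const_mul p).sub (h2'.const_mul p)).sub h3
    refine this.congr_deriv ?_
    ring
  have hφc : Continuous φ := by
    have c1 : Continuous (fun x : ℝ => (1+x) ^ ρ) :=
      (Real.continuous_rpow_const hρ0).comp (continuous_const.add continuous_id)
    have c2 : Continuous (fun x : ℝ => (1-x) ^ ρ) :=
      (Real.continuous_rpow_const hρ0).comp (continuous_const.sub continuous_id)
    fun_prop
  have hφmono : MonotoneOn φ (Set.Icc 0 1) := by
    apply monotoneOn_of_deriv_nonneg (convex_Icc 0 1) hφc.continuousOn
    · rw [interior_Icc]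
      intro x hx
      exact (hφd x hx).differentiableAt.differentiableWithinAt
    · rw [interior_Icc]
      intro x hx
      rw [(hφd x hx).deriv]
      have hx1 : (0:ℝ) < 1 + x := by linarith [hx.1]
      have hx2 : (0:ℝ) < 1 - x := by linarith [hx.2]
      have huv : 1 ≤ (1+x)^(ρ-1) * (1-x)^(ρ-1) := by
        rw [← Real.mul_rpow hx1.le hx2.le]
        apply Real.one_le_rpow_of_pos_of_le_one_of_nonpos
        · nlinarith
        · nlinarith [sq_nonneg x]
        · linarith
      have key2 : 2 ≤ (1+x)^(ρ-1) + (1-x)^(ρ-1) :=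
        aux_amgm (Real.rpow_pos_of_pos hx1 _) (Real.rpow_pos_of_pos hx2 _) huv
      nlinarith [mul_le_mul_of_nonneg_left key2 (show (0:ℝ) ≤ p*ρ by positivity)]
  have hφ0 : φ 0 = 0 := by simp [hφ]
  have hφnonneg : ∀ e ∈ Set.Icc (0:ℝ) 1, 0 ≤ φ e := by
    intro e he
    have := hφmono (Set.left_mem_Icc.2 (by norm_num)) he he.1
    rwa [hφ0] at this
  have hgd : ∀ e ∈ Set.Ioo (0:ℝ) 1, HasDerivAt g (φ e) e := by
    intro e he
    have h1 : HasDerivAt (fun x : ℝ => 1 + x) 1 e := by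
      simpa using (hasDerivAt_id e).const_add 1
    have h2 : HasDerivAt (fun x : ℝ => 1 - x) (-1) e := by
      simpa using (hasDerivAt_id e).const_sub 1
    have h1' := h1.rpow_const (p := p) (Or.inl (by nlinarith [he.1] : (1:ℝ) + e ≠ 0))
    have h2' := h2.rpow_const (p := p) (Or.inl (by nlinarith [he.2] : (1:ℝ) - e ≠ 0))
    have h3 : HasDerivAt (fun x : ℝ => p*ρ*x^2) (p*ρ*(2*e)) e := by
      simpa using (hasDerivAt_pow 2 e).const_mul (p*ρ)
    have := ((h1'.add h2').sub_const 2).sub h3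
    refine this.congr_deriv ?_
    have hpr : p - 1 = ρ := by rw [hp]; ring
    rw [hφ]
    simp only [hpr]
    ring
  have hgc : Continuous g := by
    have hppos : (0:ℝ) ≤ p := by linarith
    have c1 : Continuous (fun x : ℝ => (1+x) ^ p) :=
      (Real.continuous_rpow_const hppos).comp (continuous_const.add continuous_id)
    have c2 : Continuous (fun x : ℝ => (1-x) ^ p) :=
      (Real.continuous_rpow_const hppos).comp (continuous_const.sub continuous_id)
    fun_prop
  have hgmono : MonotoneOn g (Set.Icc 0 1) := by
    apply monotoneOn_of_deriv_nonneg (convex_Icc 0 1) hgc.continuousOn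
    · rw [interior_Icc]
      intro x hx
      exact (hgd x hx).differentiableAt.differentiableWithinAt
    · rw [interior_Icc]
      intro x hx
      rw [(hgd x hx).deriv]
      exact hφnonneg x ⟨hx.1.le, hx.2.le⟩
  have hg0 : g 0 = 0 := by norm_num [hg]
  have hgnonneg : ∀ e ∈ Set.Icc (0:ℝ) 1, 0 ≤ g e := by
    intro e he
    have := hgmono (Set.left_mem_Icc.2 (by norm_num)) he he.1
    rwa [hg0] at this
  intro e he
  have hb : (1 + ρ*e^2) ^ (p/2) ≤ 1 + (p/2) * (ρ*e^2) := by
    apply rpow_one_add_le_one_add_mul_self (by nlinarith [sq_nonneg e] : (-1:ℝ) ≤ ρ*e^2) (by positivity) (by linarith)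
  have hgn := hgnonneg e he
  simp only [hg] at hgn
  calc (1 + ρ*e^2) ^ (p/2) ≤ 1 + (p/2) * (ρ*e^2) := hb
    _ ≤ ((1+e)^p + (1-e)^p)/2 := by
        have hq : p/2 * (ρ*e^2) = (p*ρ*e^2)/2 := by ring
        rw [hq]; linarith


lemma bonami {ρ ε : ℝ} (hρ0 : 0 ≤ ρ) (hρ1 : ρ ≤ 1) (hε1 : -1 ≤ ε) (hε2 : ε ≤ 1) :
    (1 + ρ * ε ^ 2) ^ ((1 + ρ)/2) ≤ ((1 + ε) ^ (1 + ρ) + (1 - ε) ^ (1 + ρ)) / 2 := by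
  rcases eq_or_lt_of_le hρ0 with h0 | hρpos
  · rw [← h0]
    norm_num
  rcases le_or_gt 0 ε with hε | hε
  · exact bonami_main hρpos hρ1 ε ⟨hε, hε2⟩
  · have h := bonami_main hρpos hρ1 (-ε) ⟨by linarith, by linarith⟩
    have h1 : (-ε)^2 = ε^2 := by ring
    have h2 : 1 + -ε = 1 - ε := by ring
    have h3 : 1 - -ε = 1 + ε := by ring
    rw [h1, h2, h3] at h
    linarith

lemma core_two_point {ρ ε δ : ℝ} (hρ0 : 0 ≤ ρ) (hρ1 : ρ ≤ 1)
    (hε1 : -1 ≤ ε) (hε2 : ε ≤ 1) (hδ1 : -1 ≤ δ) (hδ2 : δ ≤ 1) :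
    (1 + ρ * ε * δ) ^ (1 + ρ) ≤
      (((1 + ε) ^ (1 + ρ) + (1 - ε) ^ (1 + ρ)) / 2) *
      (((1 + δ) ^ (1 + ρ) + (1 - δ) ^ (1 + ρ)) / 2) := by
  set p := 1 + ρ with hp
  have hA0 : (0:ℝ) ≤ 1 + ρ*ε^2 := by nlinarith
  have hB0 : (0:ℝ) ≤ 1 + ρ*δ^2 := by nlinarith
  have hεδ : -1 ≤ ε*δ := by nlinarith [mul_nonneg (by linarith : (0:ℝ) ≤ 1+ε) (by linarith : (0:ℝ) ≤ 1+δ), mul_nonneg (by linarith : (0:ℝ) ≤ 1-ε) (by linarith : (0:ℝ) ≤ 1-δ)]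
  have h1 : (0:ℝ) ≤ 1 + ρ*ε*δ := by nlinarith [mul_le_mul_of_nonneg_left hεδ hρ0]
  have hsq : (1 + ρ*ε*δ)^(2:ℕ) ≤ (1 + ρ*ε^2) * (1 + ρ*δ^2) := by nlinarith [sq_nonneg (ε - δ)]
  have hs : 1 + ρ*ε*δ ≤ ((1 + ρ*ε^2) * (1 + ρ*δ^2)) ^ ((1:ℝ)/2) := by
    rw [← Real.sqrt_eq_rpow]
    calc 1 + ρ*ε*δ = Real.sqrt ((1 + ρ*ε*δ)^(2:ℕ)) := by rw [Real.sqrt_sq h1]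
      _ ≤ _ := Real.sqrt_le_sqrt hsq
  have hstep : (1 + ρ*ε*δ) ^ p ≤ (1 + ρ*ε^2) ^ (p/2) * (1 + ρ*δ^2) ^ (p/2) := by
    calc (1 + ρ*ε*δ) ^ p ≤ (((1 + ρ*ε^2) * (1 + ρ*δ^2)) ^ ((1:ℝ)/2)) ^ p :=
          Real.rpow_le_rpow h1 hs (by rw [hp]; linarith)
      _ = ((1 + ρ*ε^2) * (1 + ρ*δ^2)) ^ (p/2) := by
          rw [← Real.rpow_mul (mul_nonneg hA0 hB0),
            show (1:ℝ)/2*p = p/2 by ring]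
      _ = (1 + ρ*ε^2) ^ (p/2) * (1 + ρ*δ^2) ^ (p/2) := Real.mul_rpow hA0 hB0
  have hbε := bonami hρ0 hρ1 hε1 hε2
  have hbδ := bonami hρ0 hρ1 hδ1 hδ2
  calc (1 + ρ*ε*δ) ^ p ≤ (1 + ρ*ε^2) ^ (p/2) * (1 + ρ*δ^2) ^ (p/2) := hstep
    _ ≤ _ := by
        apply mul_le_mul ?_ ?_ (Real.rpow_nonneg hB0 _) ?_
        · rw [show p/2 = (1+ρ)/2 by rw [hp]]; exact hbε
        · rw [show p/2 = (1+ρ)/2 by rw [hp]]; exact hbδ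
        · have e1 : (0:ℝ) ≤ (1+ε)^(1+ρ) := Real.rpow_nonneg (by linarith) _
          have e2 : (0:ℝ) ≤ (1-ε)^(1+ρ) := Real.rpow_nonneg (by linarith) _
          linarith


lemma one_add_mul_nonneg' {ρ ε δ : ℝ} (hρ0 : 0 ≤ ρ) (hρ1 : ρ ≤ 1)
    (hε1 : -1 ≤ ε) (hε2 : ε ≤ 1) (hδ1 : -1 ≤ δ) (hδ2 : δ ≤ 1) : 0 ≤ 1 + ρ * ε * δ := by
  have hεδ : -1 ≤ ε*δ := by
    nlinarith [mul_nonneg (by linarith : (0:ℝ) ≤ 1+ε) (by linarith : (0:ℝ) ≤ 1+δ),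
      mul_nonneg (by linarith : (0:ℝ) ≤ 1-ε) (by linarith : (0:ℝ) ≤ 1-δ)]
  nlinarith [mul_le_mul_of_nonneg_left hεδ hρ0]

lemma four_point {ρ a b c d : ℝ} (hρ0 : 0 ≤ ρ) (hρ1 : ρ ≤ 1)
    (ha : 0 ≤ a) (hb : 0 ≤ b) (hc : 0 ≤ c) (hd : 0 ≤ d) :
    ((1+ρ)/4*(a*c) + (1-ρ)/4*(a*d) + (1-ρ)/4*(b*c) + (1+ρ)/4*(b*d)) ^ (1+ρ) ≤
      ((a^(1+ρ) + b^(1+ρ))/2) * ((c^(1+ρ) + d^(1+ρ))/2) := by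
  have hp0 : (0:ℝ) < 1 + ρ := by linarith
  by_cases hab : a + b = 0
  · have ha0 : a = 0 := by linarith
    have hb0 : b = 0 := by linarith
    rw [ha0, hb0,
      show (1+ρ)/4*(0*c) + (1-ρ)/4*(0*d) + (1-ρ)/4*(0*c) + (1+ρ)/4*(0*d) = 0 by ring,
      Real.zero_rpow hp0.ne']
    have hcn : (0:ℝ) ≤ c^(1+ρ) := Real.rpow_nonneg hc _
    have hdn : (0:ℝ) ≤ d^(1+ρ) := Real.rpow_nonneg hd _
    nlinarith
  by_cases hcd : c + d = 0
  · have hc0 : c = 0 := by linarith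
    have hd0 : d = 0 := by linarith
    rw [hc0, hd0,
      show (1+ρ)/4*(a*0) + (1-ρ)/4*(a*0) + (1-ρ)/4*(b*0) + (1+ρ)/4*(b*0) = 0 by ring,
      Real.zero_rpow hp0.ne']
    have han : (0:ℝ) ≤ a^(1+ρ) := Real.rpow_nonneg ha _
    have hbn : (0:ℝ) ≤ b^(1+ρ) := Real.rpow_nonneg hb _
    nlinarith
  have hab' : 0 < a + b := lt_of_le_of_ne (by linarith) (Ne.symm hab)
  have hcd' : 0 < c + d := lt_of_le_of_ne (by linarith) (Ne.symm hcd)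
  have hε1 : -1 ≤ (a-b)/(a+b) := by rw [le_div_iff₀ hab']; linarith
  have hε2 : (a-b)/(a+b) ≤ 1 := by rw [div_le_one hab']; linarith
  have hδ1 : -1 ≤ (c-d)/(c+d) := by rw [le_div_iff₀ hcd']; linarith
  have hδ2 : (c-d)/(c+d) ≤ 1 := by rw [div_le_one hcd']; linarith
  have hm0 : (0:ℝ) ≤ (a+b)/2 := by linarith
  have hn0 : (0:ℝ) ≤ (c+d)/2 := by linarith
  have h1 : (0:ℝ) ≤ 1 + ρ * ((a-b)/(a+b)) * ((c-d)/(c+d)) :=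
    one_add_mul_nonneg' hρ0 hρ1 hε1 hε2 hδ1 hδ2
  have hbase : (1+ρ)/4*(a*c) + (1-ρ)/4*(a*d) + (1-ρ)/4*(b*c) + (1+ρ)/4*(b*d)
      = ((a+b)/2) * ((c+d)/2) * (1 + ρ * ((a-b)/(a+b)) * ((c-d)/(c+d))) := by
    field_simp
    ring
  have haeq : a^(1+ρ) = ((a+b)/2)^(1+ρ) * (1 + (a-b)/(a+b))^(1+ρ) := by
    rw [← Real.mul_rpow hm0 (by linarith : (0:ℝ) ≤ 1 + (a-b)/(a+b))]
    congr 1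
    field_simp
    ring
  have hbeq : b^(1+ρ) = ((a+b)/2)^(1+ρ) * (1 - (a-b)/(a+b))^(1+ρ) := by
    rw [← Real.mul_rpow hm0 (by linarith : (0:ℝ) ≤ 1 - (a-b)/(a+b))]
    congr 1
    field_simp
    ring
  have hceq : c^(1+ρ) = ((c+d)/2)^(1+ρ) * (1 + (c-d)/(c+d))^(1+ρ) := by
    rw [← Real.mul_rpow hn0 (by linarith : (0:ℝ) ≤ 1 + (c-d)/(c+d))]
    congr 1
    field_simp
    ring
  have hdeq : d^(1+ρ) = ((c+d)/2)^(1+ρ) * (1 - (c-d)/(c+d))^(1+ρ) := by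
    rw [← Real.mul_rpow hn0 (by linarith : (0:ℝ) ≤ 1 - (c-d)/(c+d))]
    congr 1
    field_simp
    ring
  rw [hbase, Real.mul_rpow (mul_nonneg hm0 hn0) h1, Real.mul_rpow hm0 hn0,
    haeq, hbeq, hceq, hdeq]
  have hcore := core_two_point hρ0 hρ1 hε1 hε2 hδ1 hδ2
  calc ((a+b)/2)^(1+ρ) * ((c+d)/2)^(1+ρ) * (1 + ρ * ((a-b)/(a+b)) * ((c-d)/(c+d)))^(1+ρ)
      ≤ ((a+b)/2)^(1+ρ) * ((c+d)/2)^(1+ρ) *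
        ((((1 + (a-b)/(a+b))^(1+ρ) + (1 - (a-b)/(a+b))^(1+ρ))/2) *
         (((1 + (c-d)/(c+d))^(1+ρ) + (1 - (c-d)/(c+d))^(1+ρ))/2)) := by
        apply mul_le_mul_of_nonneg_left hcore
        positivity
    _ = _ := by ring


end AuxHyper

theorem two_point_hypercontractivity
    {Ω : Type*} [MeasurableSpace Ω] (μ : Measure Ω) [IsProbabilityMeasure μ]
    (τ' τ'' : Ω → ℝ) (hτ' : Measurable τ') (hτ'' : Measurable τ'')
    (hu'1 : μ {ω | τ' ω = 1} = 1/2) (hu'2 : μ {ω | τ' ω = -1} = 1/2)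
    (hu''1 : μ {ω | τ'' ω = 1} = 1/2) (hu''2 : μ {ω | τ'' ω = -1} = 1/2)
    (ρ : ℝ) (hρdef : ρ = ∫ ω, τ' ω * τ'' ω ∂μ) (hρ : ρ ∈ Set.Icc (0 : ℝ) 1)
    (f g : ℝ → ℝ) (hf : Measurable f) (hg : Measurable g) :
    |∫ ω, f (τ' ω) * g (τ'' ω) ∂μ| ^ (1 + ρ) ≤
      (∫ ω, |f (τ' ω)| ^ (1 + ρ) ∂μ) * (∫ ω, |g (τ'' ω)| ^ (1 + ρ) ∂μ) := by
  obtain ⟨hρ0, hρ1⟩ := hρ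
  have hp0 : (0:ℝ) < 1 + ρ := by linarith
  set A : Set Ω := {ω | τ' ω = 1} with hA
  set B : Set Ω := {ω | τ' ω = -1} with hB
  set C : Set Ω := {ω | τ'' ω = 1} with hC
  set D : Set Ω := {ω | τ'' ω = -1} with hD
  have hmA : MeasurableSet A := hτ' (measurableSet_singleton 1)
  have hmB : MeasurableSet B := hτ' (measurableSet_singleton (-1))
  have hmC : MeasurableSet C := hτ'' (measurableSet_singleton 1)
  have hmD : MeasurableSet D := hτ'' (measurableSet_singleton (-1))
  have hABd : Disjoint A B := by
    rw [Set.disjoint_left]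
    intro ω h1 h2
    rw [hA, Set.mem_setOf_eq] at h1
    rw [hB, Set.mem_setOf_eq] at h2
    rw [h1] at h2
    norm_num at h2
  have hCDd : Disjoint C D := by
    rw [Set.disjoint_left]
    intro ω h1 h2
    rw [hC, Set.mem_setOf_eq] at h1
    rw [hD, Set.mem_setOf_eq] at h2
    rw [h1] at h2
    norm_num at h2
  have hABu : μ (A ∪ B)ᶜ = 0 := by
    have h1 : μ (A ∪ B) = 1 := by
      rw [measure_union hABd hmB, hu'1, hu'2, ENNReal.add_halves]
    rw [measure_compl (hmA.union hmB) (measure_ne_top μ _), h1, measure_univ, tsub_self]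
  have hCDu : μ (C ∪ D)ᶜ = 0 := by
    have h1 : μ (C ∪ D) = 1 := by
      rw [measure_union hCDd hmD, hu''1, hu''2, ENNReal.add_halves]
    rw [measure_compl (hmC.union hmD) (measure_ne_top μ _), h1, measure_univ, tsub_self]
  have hae : ∀ᵐ ω ∂μ, ω ∈ (A ∪ B) ∩ (C ∪ D) := by
    rw [ae_iff]
    convert measure_union_null hABu hCDu using 2
    rw [← Set.compl_inter]
    rfl
  have key : ∀ u v : ℝ → ℝ, ∫ ω, u (τ' ω) * v (τ'' ω) ∂μ =
      u 1 * v 1 * (μ (A ∩ C)).toReal + u 1 * v (-1) * (μ (A ∩ D)).toReal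
      + u (-1) * v 1 * (μ (B ∩ C)).toReal + u (-1) * v (-1) * (μ (B ∩ D)).toReal := by
    intro u v
    have hrepr : (fun ω => u (τ' ω) * v (τ'' ω)) =ᵐ[μ]
        (fun ω => (A ∩ C).indicator (fun _ => u 1 * v 1) ω
          + ((A ∩ D).indicator (fun _ => u 1 * v (-1)) ω
          + ((B ∩ C).indicator (fun _ => u (-1) * v 1) ω
          + (B ∩ D).indicator (fun _ => u (-1) * v (-1)) ω))) := by
      filter_upwards [hae] with ω hω
      obtain ⟨h12, h34⟩ := hω
      rcases h12 with h1 | h1 <;> rcases h34 with h2 | h2 <;>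
        simp only [hA, hB, hC, hD, Set.mem_setOf_eq] at h1 h2 <;>
        rw [h1, h2] <;>
        norm_num [Set.indicator_apply, Set.mem_inter_iff, hA, hB, hC, hD,
          Set.mem_setOf_eq, h1, h2]
    rw [integral_congr_ae hrepr]
    have i1 : Integrable ((A ∩ C).indicator (fun _ => u 1 * v 1)) μ :=
      (integrable_const _).indicator (hmA.inter hmC)
    have i2 : Integrable ((A ∩ D).indicator (fun _ => u 1 * v (-1))) μ :=
      (integrable_const _).indicator (hmA.inter hmD)
    have i3 : Integrable ((B ∩ C).indicator (fun _ => u (-1) * v 1)) μ :=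
      (integrable_const _).indicator (hmB.inter hmC)
    have i4 : Integrable ((B ∩ D).indicator (fun _ => u (-1) * v (-1))) μ :=
      (integrable_const _).indicator (hmB.inter hmD)
    have i34 : Integrable (fun ω => (B ∩ C).indicator (fun _ => u (-1) * v 1) ω
        + (B ∩ D).indicator (fun _ => u (-1) * v (-1)) ω) μ := i3.add i4
    have i234 : Integrable (fun ω => (A ∩ D).indicator (fun _ => u 1 * v (-1)) ω
        + ((B ∩ C).indicator (fun _ => u (-1) * v 1) ω
        + (B ∩ D).indicator (fun _ => u (-1) * v (-1)) ω)) μ := i2.add i34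
    rw [integral_add i1 i234, integral_add i2 i34, integral_add i3 i4,
      integral_indicator_const _ (hmA.inter hmC), integral_indicator_const _ (hmA.inter hmD),
      integral_indicator_const _ (hmB.inter hmC), integral_indicator_const _ (hmB.inter hmD)]
    simp only [smul_eq_mul, measureReal_def]
    ring
  have htr : ∀ s : Set Ω, μ s = 1/2 → (μ s).toReal = 1/2 := by
    intro s hs
    rw [hs]
    norm_num
  have hfin : ∀ s t : Set Ω, (μ (s ∩ t)).toReal + (μ (s ∩ t)).toReal = 0 → True := fun _ _ _ => trivial
  have hxy : (μ (A ∩ C)).toReal + (μ (A ∩ D)).toReal = 1/2 := by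
    rw [← ENNReal.toReal_add (measure_ne_top μ _) (measure_ne_top μ _),
      ← measure_union (hCDd.mono Set.inter_subset_right Set.inter_subset_right) (hmA.inter hmD),
      ← Set.inter_union_distrib_left, measure_inter_conull hCDu]
    exact htr _ hu'1
  have hzw : (μ (B ∩ C)).toReal + (μ (B ∩ D)).toReal = 1/2 := by
    rw [← ENNReal.toReal_add (measure_ne_top μ _) (measure_ne_top μ _),
      ← measure_union (hCDd.mono Set.inter_subset_right Set.inter_subset_right) (hmB.inter hmD),
      ← Set.inter_union_distrib_left, measure_inter_conull hCDu]
    exact htr _ hu'2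
  have hxz : (μ (A ∩ C)).toReal + (μ (B ∩ C)).toReal = 1/2 := by
    rw [← ENNReal.toReal_add (measure_ne_top μ _) (measure_ne_top μ _),
      ← measure_union (hABd.mono Set.inter_subset_left Set.inter_subset_left) (hmB.inter hmC),
      ← Set.union_inter_distrib_right, Set.inter_comm, measure_inter_conull hABu]
    exact htr _ hu''1
  have hyw : (μ (A ∩ D)).toReal + (μ (B ∩ D)).toReal = 1/2 := by
    rw [← ENNReal.toReal_add (measure_ne_top μ _) (measure_ne_top μ _),
      ← measure_union (hABd.mono Set.inter_subset_left Set.inter_subset_left) (hmB.inter hmD),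
      ← Set.union_inter_distrib_right, Set.inter_comm, measure_inter_conull hABu]
    exact htr _ hu''2
  have hρeq : ρ = (μ (A ∩ C)).toReal - (μ (A ∩ D)).toReal
      - (μ (B ∩ C)).toReal + (μ (B ∩ D)).toReal := by
    have hk := key (fun t : ℝ => t) (fun t : ℝ => t)
    rw [hρdef, hk]
    ring
  have hx0 : 0 ≤ (μ (A ∩ C)).toReal := ENNReal.toReal_nonneg
  have hy0 : 0 ≤ (μ (A ∩ D)).toReal := ENNReal.toReal_nonneg
  have hz0 : 0 ≤ (μ (B ∩ C)).toReal := ENNReal.toReal_nonneg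
  have hw0 : 0 ≤ (μ (B ∩ D)).toReal := ENNReal.toReal_nonneg
  have hxv : (μ (A ∩ C)).toReal = (1+ρ)/4 := by linarith
  have hyv : (μ (A ∩ D)).toReal = (1-ρ)/4 := by linarith
  have hzv : (μ (B ∩ C)).toReal = (1-ρ)/4 := by linarith
  have hwv : (μ (B ∩ D)).toReal = (1+ρ)/4 := by linarith
  have hfI : ∫ ω, |f (τ' ω)| ^ (1 + ρ) ∂μ
      = |f 1| ^ (1+ρ) * (μ (A ∩ C)).toReal + |f 1| ^ (1+ρ) * (μ (A ∩ D)).toReal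
      + |f (-1)| ^ (1+ρ) * (μ (B ∩ C)).toReal + |f (-1)| ^ (1+ρ) * (μ (B ∩ D)).toReal := by
    have hk := key (fun t : ℝ => |f t| ^ (1+ρ)) (fun _ : ℝ => (1:ℝ))
    simp only [mul_one] at hk
    exact hk
  have hgI : ∫ ω, |g (τ'' ω)| ^ (1 + ρ) ∂μ
      = |g 1| ^ (1+ρ) * (μ (A ∩ C)).toReal + |g (-1)| ^ (1+ρ) * (μ (A ∩ D)).toReal
      + |g 1| ^ (1+ρ) * (μ (B ∩ C)).toReal + |g (-1)| ^ (1+ρ) * (μ (B ∩ D)).toReal := by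
    have hk := key (fun _ : ℝ => (1:ℝ)) (fun t : ℝ => |g t| ^ (1+ρ))
    simp only [one_mul] at hk
    exact hk
  have hfgI := key f g
  rw [hfgI, hfI, hgI, hxv, hyv, hzv, hwv]
  have habs : |f 1 * g 1 * ((1+ρ)/4) + f 1 * g (-1) * ((1-ρ)/4)
      + f (-1) * g 1 * ((1-ρ)/4) + f (-1) * g (-1) * ((1+ρ)/4)|
      ≤ |f 1| * |g 1| * ((1+ρ)/4) + |f 1| * |g (-1)| * ((1-ρ)/4)
      + |f (-1)| * |g 1| * ((1-ρ)/4) + |f (-1)| * |g (-1)| * ((1+ρ)/4) := by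
    have t1 := abs_add_le (f 1 * g 1 * ((1+ρ)/4) + f 1 * g (-1) * ((1-ρ)/4)
      + f (-1) * g 1 * ((1-ρ)/4)) (f (-1) * g (-1) * ((1+ρ)/4))
    have t2 := abs_add_le (f 1 * g 1 * ((1+ρ)/4) + f 1 * g (-1) * ((1-ρ)/4))
      (f (-1) * g 1 * ((1-ρ)/4))
    have t3 := abs_add_le (f 1 * g 1 * ((1+ρ)/4)) (f 1 * g (-1) * ((1-ρ)/4))
    have e1 : |f 1 * g 1 * ((1+ρ)/4)| = |f 1| * |g 1| * ((1+ρ)/4) := by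
      rw [abs_mul, abs_mul, abs_of_nonneg (by linarith : (0:ℝ) ≤ (1+ρ)/4)]
    have e2 : |f 1 * g (-1) * ((1-ρ)/4)| = |f 1| * |g (-1)| * ((1-ρ)/4) := by
      rw [abs_mul, abs_mul, abs_of_nonneg (by linarith : (0:ℝ) ≤ (1-ρ)/4)]
    have e3 : |f (-1) * g 1 * ((1-ρ)/4)| = |f (-1)| * |g 1| * ((1-ρ)/4) := by
      rw [abs_mul, abs_mul, abs_of_nonneg (by linarith : (0:ℝ) ≤ (1-ρ)/4)]
    have e4 : |f (-1) * g (-1) * ((1+ρ)/4)| = |f (-1)| * |g (-1)| * ((1+ρ)/4) := by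
      rw [abs_mul, abs_mul, abs_of_nonneg (by linarith : (0:ℝ) ≤ (1+ρ)/4)]
    rw [e4] at t1
    rw [e3] at t2
    rw [e1, e2] at t3
    linarith
  calc |f 1 * g 1 * ((1+ρ)/4) + f 1 * g (-1) * ((1-ρ)/4)
      + f (-1) * g 1 * ((1-ρ)/4) + f (-1) * g (-1) * ((1+ρ)/4)| ^ (1+ρ)
      ≤ (|f 1| * |g 1| * ((1+ρ)/4) + |f 1| * |g (-1)| * ((1-ρ)/4)
        + |f (-1)| * |g 1| * ((1-ρ)/4) + |f (-1)| * |g (-1)| * ((1+ρ)/4)) ^ (1+ρ) :=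
        Real.rpow_le_rpow (abs_nonneg _) habs hp0.le
    _ = ((1+ρ)/4*(|f 1| * |g 1|) + (1-ρ)/4*(|f 1| * |g (-1)|)
        + (1-ρ)/4*(|f (-1)| * |g 1|) + (1+ρ)/4*(|f (-1)| * |g (-1)|)) ^ (1+ρ) := by
        congr 1
        ring
    _ ≤ ((|f 1| ^ (1+ρ) + |f (-1)| ^ (1+ρ))/2) * ((|g 1| ^ (1+ρ) + |g (-1)| ^ (1+ρ))/2) :=
        four_point hρ0 hρ1 (abs_nonneg _) (abs_nonneg _) (abs_nonneg _) (abs_nonneg _)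
    _ ≤ (|f 1| ^ (1+ρ) * ((1+ρ)/4) + |f 1| ^ (1+ρ) * ((1-ρ)/4)
        + |f (-1)| ^ (1+ρ) * ((1-ρ)/4) + |f (-1)| ^ (1+ρ) * ((1+ρ)/4))
        * (|g 1| ^ (1+ρ) * ((1+ρ)/4) + |g (-1)| ^ (1+ρ) * ((1-ρ)/4)
        + |g 1| ^ (1+ρ) * ((1-ρ)/4) + |g (-1)| ^ (1+ρ) * ((1+ρ)/4)) := by
        apply le_of_eq
        ring
end

section
/- Let τ', τ'' be uniform random signs with correlation E[τ'τ''] ∈ [-ρ, ρ], let r ∈ [1/2, 1] with ρ ≤ (1-r)/r, and let x, y ∈ [0,1]. Set M' = 1 + x·τ' and M'' = 1 + y·τ''. Then E[(M' M'')^r] ≤ 1. -/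
open Real Set

lemma sinh_aux {γ w : ℝ} (hγ0 : 0 ≤ γ) (hγ1 : γ ≤ 1) (hw : 0 ≤ w) :
    Real.exp (γ*w) - Real.exp (-(γ*w)) ≤ γ * (Real.exp w - Real.exp (-w)) := by
  set φ : ℝ → ℝ := fun u => γ * (Real.exp u - Real.exp (-u)) - (Real.exp (γ*u) - Real.exp (-(γ*u)))
    with hφ
  have hder : ∀ u : ℝ, HasDerivAt φ
      (γ * (Real.exp u + Real.exp (-u)) - (Real.exp (γ*u) * γ + Real.exp (-(γ*u)) * γ)) u := by
    intro u
    have h1 : HasDerivAt (fun v : ℝ => Real.exp v) (Real.exp u) u := Real.hasDerivAt_exp u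
    have h2 : HasDerivAt (fun v : ℝ => Real.exp (-v)) (-Real.exp (-u)) u := by
      simpa [Function.comp_def] using ((Real.hasDerivAt_exp (-u)).comp u ((hasDerivAt_id u).neg))
    have h3 : HasDerivAt (fun v : ℝ => Real.exp (γ*v)) (Real.exp (γ*u) * γ) u := by
      simpa [Function.comp_def] using ((Real.hasDerivAt_exp (γ*u)).comp u ((hasDerivAt_id u).const_mul γ))
    have h4 : HasDerivAt (fun v : ℝ => Real.exp (-(γ*v))) (-(Real.exp (-(γ*u)) * γ)) u := by
      simpa [Function.comp_def] using ((Real.hasDerivAt_exp (-(γ*u))).comp u (((hasDerivAt_id u).const_mul γ).neg))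
    have := ((h1.sub h2).const_mul γ).sub (h3.sub h4)
    exact this.congr_deriv (by ring)
  have hmono : MonotoneOn φ (Ici (0:ℝ)) := by
    apply monotoneOn_of_deriv_nonneg (convex_Ici 0)
    · have : Continuous φ := by fun_prop
      exact this.continuousOn
    · intro u _
      exact (hder u).differentiableAt.differentiableWithinAt
    · intro u hu
      rw [interior_Ici] at hu
      rw [(hder u).deriv]
      have hu0 : 0 ≤ u := le_of_lt hu
      have e1 : Real.exp (γ*u) ≤ Real.exp u := Real.exp_le_exp.2 (by nlinarith)
      have e2 : Real.exp (-((1+γ)*u)) ≤ 1 := by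
        rw [Real.exp_le_one_iff]
        nlinarith
      have key : Real.exp u + Real.exp (-u) - Real.exp (γ*u) - Real.exp (-(γ*u))
          = (Real.exp u - Real.exp (γ*u)) * (1 - Real.exp (-((1+γ)*u))) := by
        have a1 : Real.exp u * Real.exp (-((1+γ)*u)) = Real.exp (-(γ*u)) := by
          rw [← Real.exp_add]; ring_nf
        have a2 : Real.exp (γ*u) * Real.exp (-((1+γ)*u)) = Real.exp (-u) := by
          rw [← Real.exp_add]; ring_nf
        nlinarith [a1, a2]
      nlinarith [key, mul_nonneg (sub_nonneg.2 e1) (sub_nonneg.2 e2)]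
  have h0 : φ 0 ≤ φ w := hmono (self_mem_Ici) hw hw
  simp only [hφ] at h0
  norm_num at h0
  linarith

lemma lemT {t γ : ℝ} (ht0 : 0 < t) (ht1 : t ≤ 1) (hγ0 : 0 ≤ γ) (hγ1 : γ ≤ 1) :
    t ^ ((1-γ)/2) - t ^ ((1+γ)/2) ≤ γ * (1 - t) := by
  set L := Real.log t with hL
  have hLle : L ≤ 0 := Real.log_nonpos (le_of_lt ht0) ht1
  set w := -L/2 with hw
  have hw0 : 0 ≤ w := by simp [hw]; linarith
  have hS := sinh_aux hγ0 hγ1 hw0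
  have hmul := mul_le_mul_of_nonneg_left hS (le_of_lt (Real.exp_pos (-w)))
  have e1 : Real.exp (-w) * (Real.exp (γ*w) - Real.exp (-(γ*w)))
      = t ^ ((1-γ)/2) - t ^ ((1+γ)/2) := by
    rw [Real.rpow_def_of_pos ht0, Real.rpow_def_of_pos ht0, mul_sub, ← Real.exp_add, ← Real.exp_add]
    rw [hw]
    rw [hL]
    ring_nf
  have e2 : Real.exp (-w) * (γ * (Real.exp w - Real.exp (-w))) = γ * (1 - t) := by
    have : Real.exp (-w) * Real.exp w = 1 := by rw [← Real.exp_add]; simp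
    have h2 : Real.exp (-w) * Real.exp (-w) = t := by
      rw [← Real.exp_add, hw]
      have : -(-L/2) + -(-L/2) = L := by ring
      rw [this, hL, Real.exp_log ht0]
    nlinarith [this, h2]
  rw [e1, e2] at hmul
  exact hmul

lemma lemD {s x : ℝ} (hs1 : 1 ≤ s) (hs2 : s ≤ 2) (hx0 : 0 ≤ x) (hx1 : x < 1) :
    (1+x) ^ (s-1) - (1-x) ^ (s-1) ≤ 2*(s-1)*x*(1-x^2) ^ (s/2-1) := by
  have ha : (0:ℝ) < 1 + x := by linarith
  have hb : (0:ℝ) < 1 - x := by linarith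
  set t := (1-x)/(1+x) with htdef
  have ht0 : 0 < t := div_pos hb ha
  have ht1 : t ≤ 1 := by
    rw [htdef, div_le_one ha]; linarith
  have hγ0 : 0 ≤ s - 1 := by linarith
  have hγ1 : s - 1 ≤ 1 := by linarith
  have hT := lemT ht0 ht1 hγ0 hγ1
  -- rewrite exponents
  have he1 : (1-(s-1))/2 = 1 - s/2 := by ring
  have he2 : (1+(s-1))/2 = s/2 := by ring
  rw [he1, he2] at hT
  -- multiply by (1+x)
  have hmul := mul_le_mul_of_nonneg_left hT (le_of_lt ha)
  -- a * (b/a)^θ = a^(1-θ) * b^θ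
  have hpow : ∀ θ : ℝ, (1+x) * t ^ θ = (1+x) ^ (1-θ) * (1-x) ^ θ := by
    intro θ
    rw [htdef, Real.div_rpow (le_of_lt hb) (le_of_lt ha)]
    have hrw : (1+x) ^ (1-θ) = (1+x) / (1+x) ^ θ := by
      rw [Real.rpow_sub ha, Real.rpow_one]
    rw [hrw]
    ring
  have h1 := hpow (1 - s/2)
  have h2 := hpow (s/2)
  have hab : (1+x) * (t ^ (1 - s/2) - t ^ (s/2))
      = (1+x) ^ (s/2) * (1-x) ^ (1-s/2) - (1+x) ^ (1-s/2) * (1-x) ^ (s/2) := by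
    rw [mul_sub, h1, h2, show (1-(1-s/2)) = s/2 by ring]
  have hrhs : (1+x) * ((s-1) * (1 - t)) = (s-1) * (2*x) := by
    have ht' : t * (1+x) = 1 - x := by
      rw [htdef]; field_simp
    linear_combination (1-s) * ht'
  rw [hab, hrhs] at hmul
  -- multiply by m = (1-x^2)^(s/2-1)
  have hm : (0:ℝ) < 1 - x^2 := by nlinarith
  have hmpos : 0 < (1-x^2) ^ (s/2-1) := Real.rpow_pos_of_pos hm _
  have hmul2 := mul_le_mul_of_nonneg_left hmul (le_of_lt hmpos)
  have hfact : (1-x^2 : ℝ) = (1+x) * (1-x) := by ring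
  have key : (1-x^2) ^ (s/2-1) * ((1+x) ^ (s/2) * (1-x) ^ (1-s/2) - (1+x) ^ (1-s/2) * (1-x) ^ (s/2))
      = (1+x) ^ (s-1) - (1-x) ^ (s-1) := by
    rw [hfact, Real.mul_rpow (le_of_lt ha) (le_of_lt hb)]
    have a1 : (1+x) ^ (s/2-1) * (1-x) ^ (s/2-1) * ((1+x) ^ (s/2) * (1-x) ^ (1-s/2))
        = (1+x) ^ (s-1) := by
      rw [show (1+x) ^ (s/2-1) * (1-x) ^ (s/2-1) * ((1+x) ^ (s/2) * (1-x) ^ (1-s/2))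
          = ((1+x) ^ (s/2-1) * (1+x) ^ (s/2)) * ((1-x) ^ (s/2-1) * (1-x) ^ (1-s/2)) by ring]
      rw [← Real.rpow_add ha, ← Real.rpow_add hb,
        show s/2-1+s/2 = s-1 by ring, show s/2-1+(1-s/2) = (0:ℝ) by ring,
        Real.rpow_zero, mul_one]
    have a2 : (1+x) ^ (s/2-1) * (1-x) ^ (s/2-1) * ((1+x) ^ (1-s/2) * (1-x) ^ (s/2))
        = (1-x) ^ (s-1) := by
      rw [show (1+x) ^ (s/2-1) * (1-x) ^ (s/2-1) * ((1+x) ^ (1-s/2) * (1-x) ^ (s/2))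
          = ((1+x) ^ (s/2-1) * (1+x) ^ (1-s/2)) * ((1-x) ^ (s/2-1) * (1-x) ^ (s/2)) by ring]
      rw [← Real.rpow_add ha, ← Real.rpow_add hb,
        show s/2-1+s/2 = s-1 by ring, show s/2-1+(1-s/2) = (0:ℝ) by ring,
        Real.rpow_zero, one_mul]
    rw [mul_sub, a1, a2]
  rw [key] at hmul2
  calc (1+x) ^ (s-1) - (1-x) ^ (s-1) ≤ (1-x^2) ^ (s/2-1) * ((s-1)*(2*x)) := hmul2
    _ = 2*(s-1)*x*(1-x^2) ^ (s/2-1) := by ring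

lemma two_rpow_le {s : ℝ} (hs1 : 1 ≤ s) (hs2 : s ≤ 2) : (2:ℝ) ^ s ≤ 2*s := by
  have h := convexOn_exp.2 (Set.mem_univ (Real.log 2)) (Set.mem_univ (2*Real.log 2))
    (by linarith : (0:ℝ) ≤ 2-s) (by linarith : (0:ℝ) ≤ s-1) (by ring)
  simp only [smul_eq_mul] at h
  have e1 : (2-s) * Real.log 2 + (s-1) * (2*Real.log 2) = s * Real.log 2 := by ring
  rw [e1] at h
  have e2 : Real.exp (Real.log 2) = 2 := Real.exp_log (by norm_num)
  have e3 : Real.exp (2*Real.log 2) = 4 := by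
    rw [two_mul, Real.exp_add, e2]; norm_num
  rw [e2, e3] at h
  have e4 : (2:ℝ) ^ s = Real.exp (s * Real.log 2) := by
    rw [Real.rpow_def_of_pos (by norm_num : (0:ℝ) < 2), mul_comm]
  rw [e4]
  linarith

lemma keyC {s x : ℝ} (hs1 : 1 ≤ s) (hs2 : s ≤ 2) (hx0 : 0 ≤ x) (hx1 : x ≤ 1) :
    (1+x) ^ s + (1-x) ^ s + (2*s-2) * (1-x^2) ^ (s/2) ≤ 2*s := by
  rcases eq_or_lt_of_le hx1 with h1 | hlt
  · -- x = 1
    subst_eqs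
    norm_num
    rw [Real.zero_rpow (by linarith : s ≠ 0), Real.zero_rpow (by positivity : s/2 ≠ 0)]
    have := two_rpow_le hs1 hs2
    norm_num
    linarith
  · set g : ℝ → ℝ := fun u => 2*s - (2*s-2) * (1-u^2) ^ (s/2) - (1+u) ^ s - (1-u) ^ s with hg
    have hder : ∀ u ∈ Set.Ioo (0:ℝ) 1, HasDerivAt g
        (2*s*(s-1)*u*(1-u^2) ^ (s/2-1) - s*(1+u) ^ (s-1) + s*(1-u) ^ (s-1)) u := by
      intro u hu
      obtain ⟨hu0, hu1⟩ := hu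
      have ha : (0:ℝ) < 1 + u := by linarith
      have hb : (0:ℝ) < 1 - u := by linarith
      have hm : (0:ℝ) < 1 - u^2 := by nlinarith
      have d1 : HasDerivAt (fun v : ℝ => (1+v) ^ s) (1 * s * (1+u) ^ (s-1)) u := by
        exact ((hasDerivAt_id u).const_add 1).rpow_const (Or.inl (ne_of_gt ha))
      have d2 : HasDerivAt (fun v : ℝ => (1-v) ^ s) ((-1) * s * (1-u) ^ (s-1)) u := by
        exact ((hasDerivAt_id u).const_sub 1).rpow_const (Or.inl (ne_of_gt hb))
      have d3 : HasDerivAt (fun v : ℝ => (1-v^2) ^ (s/2)) ((-(2*u)) * (s/2) * (1-u^2) ^ (s/2-1)) u := by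
        have dd : HasDerivAt (fun v : ℝ => 1 - v^2) (-(2*u)) u := by
          simpa using ((hasDerivAt_pow 2 u).const_sub 1)
        exact dd.rpow_const (Or.inl (ne_of_gt hm))
      have := (((hasDerivAt_const u (2*s)).sub (d3.const_mul (2*s-2))).sub d1).sub d2
      exact this.congr_deriv (by ring)
    have hcont : ContinuousOn g (Set.Icc 0 1) := by
      apply ContinuousOn.sub
      apply ContinuousOn.sub
      apply ContinuousOn.sub
      · exact continuousOn_const
      · apply ContinuousOn.mul continuousOn_const
        apply ContinuousOn.rpow_const
        · fun_prop
        · intro v _; right; positivity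
      · apply ContinuousOn.rpow_const
        · fun_prop
        · intro v _; right; linarith
      · apply ContinuousOn.rpow_const
        · fun_prop
        · intro v _; right; linarith
    have hmono : MonotoneOn g (Set.Icc (0:ℝ) 1) := by
      apply monotoneOn_of_deriv_nonneg (convex_Icc 0 1) hcont
      · rw [interior_Icc]
        intro u hu
        exact ((hder u hu).differentiableAt).differentiableWithinAt
      · rw [interior_Icc]
        intro u hu
        rw [(hder u hu).deriv]
        have hD := lemD hs1 hs2 (le_of_lt hu.1) hu.2
        have hs0 : (0:ℝ) < s := by linarith
        nlinarith [hD, hs0]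
    have h0mem : (0:ℝ) ∈ Set.Icc (0:ℝ) 1 := by constructor <;> norm_num
    have hxmem : x ∈ Set.Icc (0:ℝ) 1 := ⟨hx0, hx1⟩
    have := hmono h0mem hxmem hx0
    have hg0 : g 0 = 0 := by
      simp only [hg]
      norm_num
    rw [hg0] at this
    simp only [hg] at this
    linarith

lemma starC {r x : ℝ} (hr1 : 1/2 ≤ r) (hr2 : r ≤ 1) (hx0 : 0 ≤ x) (hx1 : x ≤ 1) :
    r * ((1+x) ^ r + (1-x) ^ r)^2 + (1-r) * ((1+x) ^ r - (1-x) ^ r)^2 ≤ 4*r := by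
  have hxa : (0:ℝ) ≤ 1+x := by linarith
  have hxb : (0:ℝ) ≤ 1-x := by linarith
  have hkey := keyC (s := 2*r) (x := x) (by linarith) (by linarith) hx0 hx1
  rw [show (2*r)/2 = r by ring] at hkey
  have hA2 : (1+x) ^ (2*r) = ((1+x) ^ r)^2 := by
    rw [show (2*r) = r*2 by ring, Real.rpow_mul hxa, Real.rpow_two]
  have hB2 : (1-x) ^ (2*r) = ((1-x) ^ r)^2 := by
    rw [show (2*r) = r*2 by ring, Real.rpow_mul hxb, Real.rpow_two]
  have hAB : (1-x^2) ^ r = (1+x) ^ r * (1-x) ^ r := by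
    rw [show (1-x^2 : ℝ) = (1+x)*(1-x) by ring, Real.mul_rpow hxa hxb]
  rw [hA2, hB2, hAB] at hkey
  nlinarith [hkey]

lemma fourpoint {r c x y : ℝ} (hr1 : 1/2 ≤ r) (hr2 : r ≤ 1) (hc : c ≤ (1-r)/r)
    (hx0 : 0 ≤ x) (hx1 : x ≤ 1) (hy0 : 0 ≤ y) (hy1 : y ≤ 1) :
    (1+c)/4 * ((1+x) ^ r * (1+y) ^ r + (1-x) ^ r * (1-y) ^ r)
      + (1-c)/4 * ((1+x) ^ r * (1-y) ^ r + (1-x) ^ r * (1+y) ^ r) ≤ 1 := by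
  have hr0 : (0:ℝ) < r := by linarith
  set A1 := (1+x) ^ r with hA1
  set A2 := (1-x) ^ r with hA2
  set B1 := (1+y) ^ r with hB1
  set B2 := (1-y) ^ r with hB2
  have hA2A1 : A2 ≤ A1 := Real.rpow_le_rpow (by linarith) (by linarith) (le_of_lt hr0)
  have hB2B1 : B2 ≤ B1 := Real.rpow_le_rpow (by linarith) (by linarith) (le_of_lt hr0)
  have hA2n : 0 ≤ A2 := Real.rpow_nonneg (by linarith) r
  have hB2n : 0 ≤ B2 := Real.rpow_nonneg (by linarith) r
  have hsx := starC hr1 hr2 hx0 hx1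
  have hsy := starC hr1 hr2 hy0 hy1
  rw [← hA1, ← hA2] at hsx
  rw [← hB1, ← hB2] at hsy
  have hrc : c * r ≤ 1 - r := (le_div_iff₀ hr0).mp hc
  have hQQ : 0 ≤ (A1 - A2) * (B1 - B2) := mul_nonneg (by linarith) (by linarith)
  have h1 : (c*r) * ((A1-A2)*(B1-B2)) ≤ (1-r) * ((A1-A2)*(B1-B2)) :=
    mul_le_mul_of_nonneg_right hrc hQQ
  have hmain : r*((A1+A2)*(B1+B2)) + (1-r)*((A1-A2)*(B1-B2)) ≤ 4*r := by
    nlinarith [hsx, hsy, sq_nonneg ((A1+A2)-(B1+B2)), sq_nonneg ((A1-A2)-(B1-B2)),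
      mul_nonneg (le_of_lt hr0) (sq_nonneg ((A1+A2)-(B1+B2))),
      mul_nonneg (by linarith : (0:ℝ) ≤ 1-r) (sq_nonneg ((A1-A2)-(B1-B2)))]
  nlinarith [h1, hmain, hr0]

open MeasureTheory

theorem correlated_signs_expectation_le_one
    {Ω : Type*} [MeasurableSpace Ω] (μ : Measure Ω) [IsProbabilityMeasure μ]
    (τ' τ'' : Ω → ℝ) (hτ' : Measurable τ') (hτ'' : Measurable τ'')
    (hu'1 : μ {ω | τ' ω = 1} = 1/2) (hu'2 : μ {ω | τ' ω = -1} = 1/2)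
    (hu''1 : μ {ω | τ'' ω = 1} = 1/2) (hu''2 : μ {ω | τ'' ω = -1} = 1/2)
    (r ρ x y : ℝ) (hr : r ∈ Set.Icc (1/2 : ℝ) 1) (hρr : ρ ≤ (1 - r) / r)
    (hcorr : |∫ ω, τ' ω * τ'' ω ∂μ| ≤ ρ)
    (hx : x ∈ Set.Icc (0 : ℝ) 1) (hy : y ∈ Set.Icc (0 : ℝ) 1) :
    ∫ ω, ((1 + x * τ' ω) * (1 + y * τ'' ω)) ^ r ∂μ ≤ 1 := by
  obtain ⟨hr1, hr2⟩ := hr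
  obtain ⟨hx0, hx1⟩ := hx
  obtain ⟨hy0, hy1⟩ := hy
  set S1 : Set Ω := {ω | τ' ω = 1} with hS1def
  set S2 : Set Ω := {ω | τ' ω = -1} with hS2def
  set T1 : Set Ω := {ω | τ'' ω = 1} with hT1def
  set T2 : Set Ω := {ω | τ'' ω = -1} with hT2def
  have mS1 : MeasurableSet S1 := hτ' (measurableSet_singleton 1)
  have mS2 : MeasurableSet S2 := hτ' (measurableSet_singleton (-1))
  have mT1 : MeasurableSet T1 := hτ'' (measurableSet_singleton 1)
  have mT2 : MeasurableSet T2 := hτ'' (measurableSet_singleton (-1))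
  have dS : Disjoint S1 S2 := by
    rw [Set.disjoint_left]
    intro ω h1 h2
    simp only [hS1def, hS2def, Set.mem_setOf_eq] at h1 h2
    rw [h1] at h2; norm_num at h2
  have dT : Disjoint T1 T2 := by
    rw [Set.disjoint_left]
    intro ω h1 h2
    simp only [hT1def, hT2def, Set.mem_setOf_eq] at h1 h2
    rw [h1] at h2; norm_num at h2
  have hSfull : μ (S1 ∪ S2) = 1 := by
    rw [measure_union dS mS2, hu'1, hu'2, ENNReal.add_halves]
  have hTfull : μ (T1 ∪ T2) = 1 := by
    rw [measure_union dT mT2, hu''1, hu''2, ENNReal.add_halves]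
  have hSc : μ (S1 ∪ S2)ᶜ = 0 := by
    rw [measure_compl (mS1.union mS2) (measure_ne_top μ _), hSfull, measure_univ, tsub_self]
  have hTc : μ (T1 ∪ T2)ᶜ = 0 := by
    rw [measure_compl (mT1.union mT2) (measure_ne_top μ _), hTfull, measure_univ, tsub_self]
  -- measures of the four atoms
  have hsum1 : μ (S1 ∩ T1) + μ (S1 ∩ T2) = 1/2 := by
    rw [← measure_union (dT.mono (Set.inter_subset_right) (Set.inter_subset_right))
      (mS1.inter mT2), ← Set.inter_union_distrib_left, measure_inter_conull hTc, hu'1]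
  have hsum2 : μ (S2 ∩ T1) + μ (S2 ∩ T2) = 1/2 := by
    rw [← measure_union (dT.mono (Set.inter_subset_right) (Set.inter_subset_right))
      (mS2.inter mT2), ← Set.inter_union_distrib_left, measure_inter_conull hTc, hu'2]
  have hsum3 : μ (S1 ∩ T1) + μ (S2 ∩ T1) = 1/2 := by
    rw [← measure_union (dS.mono Set.inter_subset_left Set.inter_subset_left)
      (mS2.inter mT1), ← Set.union_inter_distrib_right, Set.inter_comm,
      measure_inter_conull hSc, hu''1]
  -- real-valued masses
  set p11 := (μ (S1 ∩ T1)).toReal with hp11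
  set p12 := (μ (S1 ∩ T2)).toReal with hp12
  set p21 := (μ (S2 ∩ T1)).toReal with hp21
  set p22 := (μ (S2 ∩ T2)).toReal with hp22
  have htr : ((1:ENNReal)/2).toReal = 1/2 := by simp
  have hq1 : p11 + p12 = 1/2 := by
    rw [hp11, hp12, ← ENNReal.toReal_add (measure_ne_top μ _) (measure_ne_top μ _), hsum1, htr]
  have hq2 : p21 + p22 = 1/2 := by
    rw [hp21, hp22, ← ENNReal.toReal_add (measure_ne_top μ _) (measure_ne_top μ _), hsum2, htr]
  have hq3 : p11 + p21 = 1/2 := by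
    rw [hp11, hp21, ← ENNReal.toReal_add (measure_ne_top μ _) (measure_ne_top μ _), hsum3, htr]
  -- a.e. the four atoms cover
  have hae : ∀ᵐ ω ∂μ, ω ∈ (S1 ∪ S2) ∩ (T1 ∪ T2) := by
    have : μ (((S1 ∪ S2) ∩ (T1 ∪ T2))ᶜ) = 0 := by
      rw [Set.compl_inter]
      exact measure_union_null hSc hTc
    exact MeasureTheory.mem_ae_iff.2 this
  have hint : ∀ (s : Set Ω), MeasurableSet s → ∀ (cc : ℝ),
      Integrable (s.indicator (fun _ => cc)) μ :=
    fun s hs cc => (integrable_const cc).indicator hs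
  have quad : ∀ (c1 c2 c3 c4 : ℝ),
      ∫ ω, ((S1 ∩ T1).indicator (fun _ => c1) ω + (S1 ∩ T2).indicator (fun _ => c2) ω
        + (S2 ∩ T1).indicator (fun _ => c3) ω + (S2 ∩ T2).indicator (fun _ => c4) ω) ∂μ
      = p11 * c1 + p12 * c2 + p21 * c3 + p22 * c4 := by
    intro c1 c2 c3 c4
    have iA : Integrable (fun ω => (S1 ∩ T1).indicator (fun _ => c1) ω) μ :=
      hint _ (mS1.inter mT1) c1
    have iB : Integrable (fun ω => (S1 ∩ T2).indicator (fun _ => c2) ω) μ :=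
      hint _ (mS1.inter mT2) c2
    have iC : Integrable (fun ω => (S2 ∩ T1).indicator (fun _ => c3) ω) μ :=
      hint _ (mS2.inter mT1) c3
    have iD : Integrable (fun ω => (S2 ∩ T2).indicator (fun _ => c4) ω) μ :=
      hint _ (mS2.inter mT2) c4
    have iAB : Integrable (fun ω => (S1 ∩ T1).indicator (fun _ => c1) ω
        + (S1 ∩ T2).indicator (fun _ => c2) ω) μ := by exact iA.add iB
    have iABC : Integrable (fun ω => (S1 ∩ T1).indicator (fun _ => c1) ω
        + (S1 ∩ T2).indicator (fun _ => c2) ω + (S2 ∩ T1).indicator (fun _ => c3) ω) μ := by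
      exact iAB.add iC
    rw [integral_add iABC iD, integral_add iAB iC, integral_add iA iB,
      integral_indicator_const _ (mS1.inter mT1), integral_indicator_const _ (mS1.inter mT2),
      integral_indicator_const _ (mS2.inter mT1), integral_indicator_const _ (mS2.inter mT2)]
    simp only [smul_eq_mul]
    rw [hp11, hp12, hp21, hp22, measureReal_def, measureReal_def, measureReal_def, measureReal_def]
    try ring
  set C11 := ((1+x)*(1+y) : ℝ) ^ r with hC11
  set C12 := ((1+x)*(1-y) : ℝ) ^ r with hC12
  set C21 := ((1-x)*(1+y) : ℝ) ^ r with hC21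
  set C22 := ((1-x)*(1-y) : ℝ) ^ r with hC22
  have hfg : (fun ω => ((1 + x * τ' ω) * (1 + y * τ'' ω)) ^ r) =ᵐ[μ]
      (fun ω => (S1 ∩ T1).indicator (fun _ => C11) ω + (S1 ∩ T2).indicator (fun _ => C12) ω
        + (S2 ∩ T1).indicator (fun _ => C21) ω + (S2 ∩ T2).indicator (fun _ => C22) ω) := by
    filter_upwards [hae] with ω hω
    obtain ⟨hωS, hωT⟩ := hω
    rcases hωS with h1 | h1 <;> rcases hωT with h2 | h2 <;>
      simp only [hS1def, hS2def, hT1def, hT2def, Set.mem_setOf_eq] at h1 h2 <;>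
      · simp only [Set.indicator_apply, Set.mem_inter_iff, hS1def, hS2def, hT1def, hT2def,
          Set.mem_setOf_eq, h1, h2]
        norm_num [hC11, hC12, hC21, hC22]
        try norm_num [sub_eq_add_neg]
  have hfh : (fun ω => τ' ω * τ'' ω) =ᵐ[μ]
      (fun ω => (S1 ∩ T1).indicator (fun _ => (1:ℝ)) ω + (S1 ∩ T2).indicator (fun _ => (-1:ℝ)) ω
        + (S2 ∩ T1).indicator (fun _ => (-1:ℝ)) ω + (S2 ∩ T2).indicator (fun _ => (1:ℝ)) ω) := by
    filter_upwards [hae] with ω hω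
    obtain ⟨hωS, hωT⟩ := hω
    rcases hωS with h1 | h1 <;> rcases hωT with h2 | h2 <;>
      simp only [hS1def, hS2def, hT1def, hT2def, Set.mem_setOf_eq] at h1 h2 <;>
      · simp only [Set.indicator_apply, Set.mem_inter_iff, hS1def, hS2def, hT1def, hT2def,
          Set.mem_setOf_eq, h1, h2]
        norm_num
  have hgint : ∫ ω, ((1 + x * τ' ω) * (1 + y * τ'' ω)) ^ r ∂μ
      = p11 * C11 + p12 * C12 + p21 * C21 + p22 * C22 := by
    rw [integral_congr_ae hfg, quad]
  have hhint : ∫ ω, τ' ω * τ'' ω ∂μ = p11 - p12 - p21 + p22 := by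
    rw [integral_congr_ae hfh, quad]
    ring
  set c := p11 - p12 - p21 + p22 with hcdef
  rw [hhint] at hcorr
  have hc : c ≤ (1-r)/r := le_trans (le_trans (le_abs_self c) hcorr) hρr
  have hp2112 : p21 = p12 := by linarith
  have hp2211 : p22 = p11 := by linarith
  have h11c : p11 = (1+c)/4 := by rw [hcdef]; linarith
  have h12c : p12 = (1-c)/4 := by rw [hcdef]; linarith
  have hC11' : C11 = (1+x) ^ r * (1+y) ^ r := Real.mul_rpow (by linarith) (by linarith)
  have hC12' : C12 = (1+x) ^ r * (1-y) ^ r := Real.mul_rpow (by linarith) (by linarith)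
  have hC21' : C21 = (1-x) ^ r * (1+y) ^ r := Real.mul_rpow (by linarith) (by linarith)
  have hC22' : C22 = (1-x) ^ r * (1-y) ^ r := Real.mul_rpow (by linarith) (by linarith)
  rw [hgint, hC11', hC12', hC21', hC22', hp2112, hp2211, h11c, h12c]
  have hfp := fourpoint hr1 hr2 hc hx0 hx1 hy0 hy1
  linarith [hfp]
end
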